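/- Let a_1,…,a_n be distinct nonzero real numbers and P(x) = ∏_{j=1}^n (x − a_j). Then for every (x_1,…,x_{n+2}) ∈ ℝ^{n+2}: P_{n+2}(x_1,…,x_{n+2}) − J^{σ,a}_{n+2}(x_1,…,x_{n+1}) = ((−1)^{n+1}/(n+2)) · L(xP)(x_1,…,x_{n+2}), where xP denotes the polynomial x·P(x). In particular, P_{n+2}(1, x, x²,…, x^{n+1}) − J^{σ,a}_{n+2}(1, x,…, x^n) = ((−1)^{n+1}/(n+2)) x P(x) for every x ∈ ℝ. -/

import Mathlib

/-- The Kailath–Segall polynomials, defined by `P₀ = 1` and the recurrence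
`Pₙ = (1/n)(Pₙ₋₁ x₁ − Pₙ₋₂ x₂ + ⋯ + (−1)^{n+1} P₀ xₙ)`. -/
noncomputable def KS {A : Type*} [CommRing A] [Algebra ℚ A] (x : ℕ → A) : ℕ → A
  | 0 => 1
  | n + 1 =>
      (((n : ℚ) + 1)⁻¹) •
        ∑ j ∈ Finset.range (n + 1), ((-1 : A) ^ j * KS x (n - j) * x (j + 1))
  termination_by n => n
  decreasing_by omega

/-- For `P(x) = c₀ + c₁ x + ⋯ + cₘ xᵐ` of degree `m`,
`L(P)(x₁,…,x_{m+1}) = c₀ x₁ + ⋯ + cₘ x_{m+1}` (arguments indexed from 1). -/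
noncomputable def Lpoly (P : Polynomial ℝ) (x : ℕ → ℝ) : ℝ :=
  ∑ i ∈ Finset.range (P.natDegree + 1), P.coeff i * x (i + 1)

/-!
`Pₘ₊₁` depends only on `x₁,…,x_{m+1}`, and in its last variable it is affine with slope
`(-1)^m/(m+1)` (the `P₀ xₘ₊₁` term of the recurrence). Since `J^{σ,a}_{n+2}` only replaces
`x_{n+2}` by `u^σ_{n+2}`, the difference is `(-1)^{n+1}/(n+2) · (x_{n+2} - u^σ_{n+2})`.
On the other hand, the coefficients `c_i` of `P` annihilate the moment sequence
`m_k = Σ_j a_j^k y_j` shifted by two, as `Σ_i c_i m_{i+2} = Σ_j a_j² y_j P(a_j) = 0`; since `m_k = x_k`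
for `2 ≤ k ≤ n+1` and `c_n = 1`, this gives `L(xP)(x) = x_{n+2} - m_{n+2}`.
-/

open Polynomial Finset

section KailathSegall

variable {A : Type*} [CommRing A] [Algebra ℚ A]

theorem KS_zero (x : ℕ → A) : KS x 0 = 1 := by
  rw [KS]

theorem KS_succ (x : ℕ → A) (m : ℕ) :
    KS x (m + 1) =
      ((m : ℚ) + 1)⁻¹ • ∑ j ∈ range (m + 1), (-1 : A) ^ j * KS x (m - j) * x (j + 1) := by
  rw [KS]

theorem KS_congr {x x' : ℕ → A} {m : ℕ} (h : ∀ k, 1 ≤ k → k ≤ m → x k = x' k) :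
    KS x m = KS x' m := by
  induction m using Nat.strong_induction_on with
  | _ m ih =>
    cases m with
    | zero => rw [KS_zero, KS_zero]
    | succ m =>
      rw [KS_succ, KS_succ]
      refine congrArg _ (sum_congr rfl fun j hj => ?_)
      have hj : j < m + 1 := mem_range.mp hj
      rw [ih (m - j) (by omega) fun k h1 h2 => h k h1 (by omega),
        h (j + 1) (by omega) (by omega)]

theorem KS_succ_sub_KS_succ {x x' : ℕ → A} {m : ℕ} (h : ∀ k, 1 ≤ k → k ≤ m → x k = x' k) :
    KS x (m + 1) - KS x' (m + 1) =
      ((m : ℚ) + 1)⁻¹ • ((-1 : A) ^ m * (x (m + 1) - x' (m + 1))) := by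
  rw [KS_succ, KS_succ, ← smul_sub, ← sum_sub_distrib,
    sum_eq_single_of_mem m (self_mem_range_succ m)]
  · rw [Nat.sub_self, KS_zero, KS_zero, mul_one, mul_sub]
  · intro j hj hjm
    have hj : j < m := by have := mem_range.mp hj; omega
    rw [KS_congr (m := m - j) fun k h1 h2 => h k h1 (by omega),
      h (j + 1) (by omega) (by omega), sub_self]

end KailathSegall

theorem sum_coeff_mul_shifted_moment {R ι : Type*} [CommRing R] [Fintype ι] (P : R[X])
    (a y : ι → R) :
    ∑ i ∈ range (P.natDegree + 1), P.coeff i * ∑ j, a j ^ (i + 2) * y j =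
      ∑ j, a j ^ 2 * y j * P.eval (a j) := by
  simp_rw [mul_sum]
  rw [sum_comm]
  refine sum_congr rfl fun j _ => ?_
  rw [eval_eq_sum_range, mul_sum]
  exact sum_congr rfl fun i _ => by ring

theorem Lpoly_pow_sub_one (P : ℝ[X]) (t : ℝ) : Lpoly P (fun k => t ^ (k - 1)) = P.eval t := by
  simp only [Lpoly, Nat.add_sub_cancel, eval_eq_sum_range]

theorem Lpoly_X_mul (P : ℝ[X]) (x : ℕ → ℝ) :
    Lpoly (X * P) x = ∑ i ∈ range (P.natDegree + 1), P.coeff i * x (i + 2) := by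
  rcases eq_or_ne P 0 with rfl | hP
  · simp [Lpoly]
  · rw [Lpoly, natDegree_X_mul hP, sum_range_succ']
    simp [coeff_X_mul]

theorem Lpoly_X_mul_of_isRoot {ι : Type*} [Fintype ι] {P : ℝ[X]} (hP : P.Monic) {a y : ι → ℝ}
    (hroot : ∀ j, P.IsRoot (a j)) {x : ℕ → ℝ}
    (hx : ∀ k, 2 ≤ k → k ≤ P.natDegree + 1 → x k = ∑ j, a j ^ k * y j) :
    Lpoly (X * P) x = x (P.natDegree + 2) - ∑ j, a j ^ (P.natDegree + 2) * y j := by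
  have hmoments :
      ∑ i ∈ range (P.natDegree + 1), P.coeff i * ∑ j, a j ^ (i + 2) * y j = 0 := by
    rw [sum_coeff_mul_shifted_moment]
    exact sum_eq_zero fun j _ => by rw [(hroot j).eq_zero, mul_zero]
  have hlow : ∑ i ∈ range P.natDegree, P.coeff i * x (i + 2) =
      ∑ i ∈ range P.natDegree, P.coeff i * ∑ j, a j ^ (i + 2) * y j :=
    sum_congr rfl fun i hi => by rw [hx (i + 2) (by omega) (by have := mem_range.mp hi; omega)]
  rw [sum_range_succ, hP.coeff_natDegree, one_mul] at hmoments
  rw [Lpoly_X_mul, sum_range_succ, hP.coeff_natDegree, one_mul]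
  linarith

theorem KS_sub_KS_replace_eq_Lpoly {n : ℕ} (a : Fin n → ℝ) {x : ℕ → ℝ} {y : Fin n → ℝ}
    (hx : ∀ k, 2 ≤ k → k ≤ n + 1 → x k = ∑ j, a j ^ k * y j) :
    KS x (n + 2) -
        KS (fun k => if k = n + 2 then ∑ j, a j ^ (n + 2) * y j else x k) (n + 2) =
      ((-1 : ℝ) ^ (n + 1) / (n + 2)) * Lpoly (X * ∏ j, (X - C (a j))) x := by
  have hdeg : (∏ j, (X - C (a j))).natDegree = n := by simp
  have hroot : ∀ j, (∏ i, (X - C (a i))).IsRoot (a j) := fun j =>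
    (isRoot_prod _ _ _).2 ⟨j, mem_univ j, root_X_sub_C.2 rfl⟩
  have hL := Lpoly_X_mul_of_isRoot (monic_prod_X_sub_C a univ) hroot (x := x) (by rwa [hdeg])
  rw [hdeg] at hL
  rw [KS_succ_sub_KS_succ (m := n + 1) fun k _ hk => (if_neg (by omega)).symm, hL]
  simp only [if_pos, Rat.smul_def]
  push_cast
  ring

theorem kailathSegall_minus_J_sigma_general (n : ℕ) (a : Fin n → ℝ) :
    (∀ x : ℕ → ℝ, ∀ y : Fin n → ℝ,
      (∀ k, 2 ≤ k → k ≤ n + 1 → x k = ∑ j, a j ^ k * y j) →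
      KS x (n + 2) -
          KS (fun k => if k = n + 2 then ∑ j, a j ^ (n + 2) * y j else x k) (n + 2) =
        ((-1 : ℝ) ^ (n + 1) / (n + 2)) *
          Lpoly (Polynomial.X * ∏ j, (Polynomial.X - Polynomial.C (a j))) x) ∧
    (∀ x0 : ℝ, ∀ y : Fin n → ℝ,
      (∀ k, 2 ≤ k → k ≤ n + 1 → x0 ^ (k - 1) = ∑ j, a j ^ k * y j) →
      KS (fun k => x0 ^ (k - 1)) (n + 2) -
          KS (fun k => if k = n + 2 then ∑ j, a j ^ (n + 2) * y j
            else x0 ^ (k - 1)) (n + 2) =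
        ((-1 : ℝ) ^ (n + 1) / (n + 2)) *
          (x0 * Polynomial.eval x0 (∏ j, (Polynomial.X - Polynomial.C (a j))))) := by
  refine ⟨fun x y hx => KS_sub_KS_replace_eq_Lpoly a hx, fun x0 y hx => ?_⟩
  rw [KS_sub_KS_replace_eq_Lpoly a hx, Lpoly_pow_sub_one, eval_mul, eval_X]

/-- Let `a₁,…,aₙ` be distinct nonzero reals and `P(x) = ∏_j (x − a_j)`. For
`(x₁,…,x_{n+2}) ∈ ℝ^{n+2}`, with `(y_j)` the (unique) solution of the Vandermonde
system `x_k = Σ_j a_j^k y_j` (`k = 2,…,n+1`), `u^σ_{n+2} = Σ_j a_j^{n+2} y_j` and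
`J^{σ,a}_{n+2}(x₁,…,x_{n+1}) = P_{n+2}(x₁,…,x_{n+1},u^σ_{n+2})`:
`P_{n+2}(x₁,…,x_{n+2}) − J^{σ,a}_{n+2}(x₁,…,x_{n+1})
  = ((−1)^{n+1}/(n+2)) L(xP)(x₁,…,x_{n+2})`;
in particular
`P_{n+2}(1,x,…,x^{n+1}) − J^{σ,a}_{n+2}(1,x,…,xⁿ) = ((−1)^{n+1}/(n+2)) x P(x)`. -/
theorem kailathSegall_minus_J_sigma (n : ℕ) (a : Fin n → ℝ)
    (ha : Function.Injective a) (ha0 : ∀ j, a j ≠ 0) :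
    (∀ x : ℕ → ℝ, ∀ y : Fin n → ℝ,
      (∀ k, 2 ≤ k → k ≤ n + 1 → x k = ∑ j, a j ^ k * y j) →
      KS x (n + 2) -
          KS (fun k => if k = n + 2 then ∑ j, a j ^ (n + 2) * y j else x k) (n + 2) =
        ((-1 : ℝ) ^ (n + 1) / (n + 2)) *
          Lpoly (Polynomial.X * ∏ j, (Polynomial.X - Polynomial.C (a j))) x) ∧
    (∀ x0 : ℝ, ∀ y : Fin n → ℝ,
      (∀ k, 2 ≤ k → k ≤ n + 1 → x0 ^ (k - 1) = ∑ j, a j ^ k * y j) →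
      KS (fun k => x0 ^ (k - 1)) (n + 2) -
          KS (fun k => if k = n + 2 then ∑ j, a j ^ (n + 2) * y j
            else x0 ^ (k - 1)) (n + 2) =
        ((-1 : ℝ) ^ (n + 1) / (n + 2)) *
          (x0 * Polynomial.eval x0 (∏ j, (Polynomial.X - Polynomial.C (a j))))) :=
  kailathSegall_minus_J_sigma_general n a
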